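/- arXiv:1011.0359 — 3 statements merged into one kernel-verified Lean document; each statement's English description precedes it below -/
import Mathlib

section
/- Let f : ℂ → ℂ be an entire function and let S be a bounded domain (a nonempty bounded open connected subset of ℂ). Then f(S̃) ⊆ (f(S))~, where for a set T ⊆ ℂ, T̃ denotes the union of T with all bounded connected components of its complement ℂ \ T. -/
/-!
If `z ∉ S` has bounded component in `Sᶜ`, enclose that component by a bounded open set `Ω` whose frontier lies in `S`
(a compactness argument: in the compact set `Sᶜ ∩ closedBall z R` the component of `z` is the
intersection of its clopen neighbourhoods, so one of them stays away from the sphere).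
A nonconstant entire `f` is an open map, so `f '' Ω` is a bounded open set with frontier inside
`f '' frontier Ω ⊆ f '' S`; no connected subset of `(f '' S)ᶜ` can leave it, which traps the
component of `f z`. If `f` is constant, `f z` already lies in `f '' S` because `frontier Ω ⊆ S`
is nonempty.
-/

open Set Bornology

/-- The union of `T` with all bounded connected components of its complement. -/
def fillSet (T : Set ℂ) : Set ℂ :=
  T ∪ {z | z ∉ T ∧ Bornology.IsBounded (connectedComponentIn Tᶜ z)}

open Metric

lemma exists_isClopen_mem_disjoint_of_disjoint_connectedComponent {X : Type*}
    [TopologicalSpace X] [T2Space X] [CompactSpace X] {x : X} {B : Set X} (hB : IsClosed B)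
    (h : Disjoint B (connectedComponent x)) : ∃ V, IsClopen V ∧ x ∈ V ∧ Disjoint B V := by
  have : Nonempty {V : Set X // IsClopen V ∧ x ∈ V} :=
    ⟨⟨univ, isClopen_univ, mem_univ x⟩⟩
  obtain ⟨⟨V, hV, hxV⟩, hBV⟩ := hB.isCompact.elim_directed_family_closed
    (fun V : {V : Set X // IsClopen V ∧ x ∈ V} => (V : Set X)) (fun V => V.2.1.isClosed)
    (by rw [← connectedComponent_eq_iInter_isClopen, ← disjoint_iff_inter_eq_empty]; exact h)
    (fun V W => ⟨⟨V.1 ∩ W.1, V.2.1.inter W.2.1, V.2.2, W.2.2⟩,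
      inter_subset_left, inter_subset_right⟩)
  exact ⟨V, hV, hxV, disjoint_iff_inter_eq_empty.mpr hBV⟩

lemma exists_isCompact_isClosed_diff_of_isBounded_connectedComponentIn {X : Type*}
    [MetricSpace X] [ProperSpace X] {F : Set X} (hF : IsClosed F) {z : X} (hz : z ∈ F)
    (hC : IsBounded (connectedComponentIn F z)) :
    ∃ Z ⊆ F, IsCompact Z ∧ IsClosed (F \ Z) ∧ z ∈ Z := by
  obtain ⟨R, hCR⟩ := hC.subset_ball z
  set K := F ∩ closedBall z R
  have hK : IsClosed K := hF.inter isClosed_closedBall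
  have : CompactSpace K :=
    isCompact_iff_compactSpace.mp ((isCompact_closedBall z R).inter_left hF)
  have hzK : z ∈ K := ⟨hz, ball_subset_closedBall (hCR (mem_connectedComponentIn hz))⟩
  set B : Set K := {x | R ≤ dist (x : X) z}
  have hB : IsClosed B :=
    isClosed_le continuous_const (continuous_subtype_val.dist continuous_const)
  have hBC : Disjoint B (connectedComponent (⟨z, hzK⟩ : K)) := by
    refine Set.disjoint_left.mpr fun x hxB hxC => (show R ≤ dist (x : X) z from hxB).not_gt ?_
    have : (x : X) ∈ connectedComponentIn F z :=
      connectedComponentIn_mono z inter_subset_left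
        ((connectedComponentIn_eq_image hzK).symm ▸ mem_image_of_mem _ hxC)
    exact mem_ball.mp (hCR this)
  obtain ⟨V, hV, hzV, hBV⟩ := exists_isClopen_mem_disjoint_of_disjoint_connectedComponent hB hBC
  have hVball : Subtype.val '' V ⊆ ball z R := by
    rintro _ ⟨x, hxV, rfl⟩
    exact mem_ball.mpr (not_le.mp fun hx => Set.disjoint_left.mp hBV hx hxV)
  have hdiff : F \ Subtype.val '' V = Subtype.val '' Vᶜ ∪ F \ ball z R := by
    ext x
    constructor
    · rintro ⟨hxF, hxV⟩
      by_cases hx : x ∈ ball z R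
      · exact Or.inl
          ⟨⟨x, hxF, ball_subset_closedBall hx⟩, fun h => hxV ⟨_, h, rfl⟩, rfl⟩
      · exact Or.inr ⟨hxF, hx⟩
    · rintro (⟨x, hxV, rfl⟩ | ⟨hxF, hx⟩)
      · exact ⟨x.2.1, fun ⟨y, hyV, hyx⟩ => hxV (Subtype.ext hyx ▸ hyV)⟩
      · exact ⟨hxF, fun h => hx (hVball h)⟩
  refine ⟨Subtype.val '' V, fun _ ⟨x, _, hx⟩ => hx ▸ x.2.1,
    hV.isClosed.isCompact.image continuous_subtype_val, ?_, ⟨_, hzV, rfl⟩⟩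
  rw [hdiff]
  exact (hK.isClosedEmbedding_subtypeVal.isClosedMap _ hV.compl.isClosed).union
    (hF.inter isOpen_ball.isClosed_compl)

lemma exists_isOpen_subset_disjoint_frontier {X : Type*} [TopologicalSpace X] [NormalSpace X]
    {F Z W : Set X} (hZ : IsClosed Z) (hFZ : IsClosed (F \ Z)) (hW : IsOpen W) (hZW : Z ⊆ W) :
    ∃ U, IsOpen U ∧ Z ⊆ U ∧ U ⊆ W ∧ Disjoint (frontier U) F := by
  obtain ⟨O₁, O₂, hO₁, hO₂, hZO₁, hFO₂, hO⟩ :=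
    normal_separation hZ hFZ disjoint_sdiff_right
  refine ⟨O₁ ∩ W, hO₁.inter hW, subset_inter hZO₁ hZW, inter_subset_right, ?_⟩
  refine Set.disjoint_left.mpr fun x hx hxF => ?_
  rw [(hO₁.inter hW).frontier_eq] at hx
  by_cases hxZ : x ∈ Z
  · exact hx.2 ⟨hZO₁ hxZ, hZW hxZ⟩
  · have hcl : x ∈ closure O₁ := closure_mono inter_subset_left hx.1
    exact Set.disjoint_left.mp (hO.closure_left hO₂) hcl (hFO₂ ⟨hxF, hxZ⟩)

lemma exists_isOpen_isBounded_frontier_subset {X : Type*} [MetricSpace X] [ProperSpace X]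
    {T : Set X} (hT : IsOpen T) {z : X} (hz : z ∉ T)
    (hC : IsBounded (connectedComponentIn Tᶜ z)) :
    ∃ U, IsOpen U ∧ IsBounded U ∧ z ∈ U ∧ frontier U ⊆ T := by
  obtain ⟨Z, -, hZ, hTZ, hzZ⟩ :=
    exists_isCompact_isClosed_diff_of_isBounded_connectedComponentIn hT.isClosed_compl hz hC
  obtain ⟨r, hZr⟩ := hZ.isBounded.subset_ball z
  obtain ⟨U, hU, hZU, hUr, hfr⟩ :=
    exists_isOpen_subset_disjoint_frontier hZ.isClosed hTZ isOpen_ball hZr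
  exact ⟨U, hU, isBounded_ball.subset hUr, hZU hzZ, disjoint_compl_right_iff_subset.mp hfr⟩

lemma connectedComponentIn_compl_subset_of_frontier_subset {X : Type*} [TopologicalSpace X]
    {T U : Set X} (hU : IsOpen U) {z : X} (hzU : z ∈ U) (hzT : z ∉ T) (hUT : frontier U ⊆ T) :
    connectedComponentIn Tᶜ z ⊆ U := by
  refine isPreconnected_connectedComponentIn.subset_of_closure_inter_subset hU
    ⟨z, mem_connectedComponentIn hzT, hzU⟩ fun x ⟨hxU, hxC⟩ => ?_
  by_contra hx
  exact connectedComponentIn_subset _ _ hxC (hUT (hU.frontier_eq ▸ ⟨hxU, hx⟩))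

lemma frontier_image_subset_image_frontier {X Y : Type*} [TopologicalSpace X]
    [TopologicalSpace Y] [T2Space Y] {f : X → Y} (hf : Continuous f) {Ω : Set X}
    (hΩ : IsCompact (closure Ω)) (hfΩ : IsOpen (f '' Ω)) :
    frontier (f '' Ω) ⊆ f '' frontier Ω := by
  rw [hfΩ.frontier_eq]
  rintro _ ⟨hcl, hnot⟩
  obtain ⟨q, hq, rfl⟩ := closure_minimal (image_mono subset_closure) (hΩ.image hf).isClosed hcl
  exact ⟨q, ⟨hq, fun hq' => hnot (mem_image_of_mem f (interior_subset hq'))⟩, rfl⟩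

theorem stmt_7_general (f : ℂ → ℂ) (hf : Differentiable ℂ f) (S : Set ℂ)
    (hopen : IsOpen S) :
    f '' fillSet S ⊆ fillSet (f '' S) := by
  rintro _ ⟨z, hz, rfl⟩
  by_cases hfz : f z ∈ f '' S
  · exact Or.inl hfz
  obtain ⟨hzS, hC⟩ := hz.resolve_left fun h => hfz (mem_image_of_mem f h)
  obtain ⟨Ω, hΩ, hΩb, hzΩ, hΩS⟩ := exists_isOpen_isBounded_frontier_subset hopen hzS hC
  have hfopen : IsOpenMap f := by
    refine (Complex.analyticOnNhd_univ_iff_differentiable.mpr hf).is_constant_or_isOpenMap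
      |>.resolve_left fun ⟨w, hw⟩ => ?_
    have hΩne : Ω ≠ univ := fun h => NormedSpace.unbounded_univ ℂ ℂ (h ▸ hΩb)
    obtain ⟨s, hs⟩ := nonempty_frontier_iff.mpr ⟨⟨z, hzΩ⟩, hΩne⟩
    exact hfz ⟨s, hΩS hs, (hw s).trans (hw z).symm⟩
  have hfΩ : IsOpen (f '' Ω) := hfopen Ω hΩ
  have hfr : frontier (f '' Ω) ⊆ f '' S :=
    (frontier_image_subset_image_frontier hf.continuous hΩb.isCompact_closure hfΩ).trans
      (image_mono hΩS)
  have hfΩb : IsBounded (f '' Ω) :=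
    ((hΩb.isCompact_closure.image hf.continuous).isBounded).subset (image_mono subset_closure)
  exact Or.inr ⟨hfz, hfΩb.subset <| connectedComponentIn_compl_subset_of_frontier_subset hfΩ
    (mem_image_of_mem f hzΩ) hfz hfr⟩

/-- `f(S̃) ⊆ (f(S))~` for an entire function `f` and a bounded domain `S`. -/
theorem stmt_7 (f : ℂ → ℂ) (hf : Differentiable ℂ f) (S : Set ℂ)
    (hopen : IsOpen S) (hconn : IsConnected S) (hbdd : Bornology.IsBounded S) :
    f '' fillSet S ⊆ fillSet (f '' S) :=
  stmt_7_general f hf S hopen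
end

section
/- Let f be a transcendental entire function, let R > 0 be such that M(r, f) > r for all r ≥ R, and let L ∈ ℤ. If G is a bounded connected component of the complement of A_R^L(f), then ∂G ⊆ A_R^L(f), and for each n ∈ ℕ the image f^n(G) is a bounded connected component of the complement of A_R^{n+L}(f). -/
open Set Metric Topology Function Bornology

/-- The maximum modulus `M(r, f)` of `f` on the circle `|z| = r`. -/
noncomputable def maxMod (f : ℂ → ℂ) (r : ℝ) : ℝ :=
  sSup ((fun z => ‖f z‖) '' Metric.sphere (0 : ℂ) r)

/-- `f` is a transcendental entire function: holomorphic on all of `ℂ` and not a polynomial. -/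
def TranscEntire (f : ℂ → ℂ) : Prop :=
  Differentiable ℂ f ∧ ¬ ∃ p : Polynomial ℂ, ∀ z, f z = p.eval z

/-- The fast escaping set `A(f)` (with parameter `R`). -/
def fastEscaping (f : ℂ → ℂ) (R : ℝ) : Set ℂ :=
  {z | ∃ L : ℕ, ∀ n : ℕ, (maxMod f)^[n] R ≤ ‖f^[n + L] z‖}

/-- The `L`-th level `A_R^L(f)` of the fast escaping set. -/
def levelSet (f : ℂ → ℂ) (R : ℝ) (L : ℤ) : Set ℂ :=
  {z | ∀ n : ℕ, 0 ≤ (n : ℤ) + L →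
    (maxMod f)^[((n : ℤ) + L).toNat] R ≤ ‖f^[n] z‖}

/-- `E ⊆ ℂ` is an (infinite) spider's web. -/
def SpidersWeb (E : Set ℂ) : Prop :=
  IsConnected E ∧ ∃ G : ℕ → Set ℂ,
    (∀ n, IsOpen (G n) ∧ IsConnected (G n) ∧ Bornology.IsBounded (G n) ∧
      SimplyConnectedSpace (G n) ∧ G n ⊆ G (n + 1) ∧ frontier (G n) ⊆ E) ∧
    (⋃ n, G n) = Set.univ

/-- `K` is a connected component of the set `S`. -/
def IsCompOf {X : Type*} [TopologicalSpace X] (K S : Set X) : Prop :=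
  ∃ z ∈ S, K = connectedComponentIn S z

/-- The `n`-th fundamental hole for `A_R(f)`: the component of the complement of
`A_R^n(f)` containing `0`. -/
noncomputable def fundHole (f : ℂ → ℂ) (R : ℝ) (n : ℤ) : Set ℂ :=
  connectedComponentIn (levelSet f R n)ᶜ 0

/-- The `n`-th fundamental loop for `A_R(f)`. -/
noncomputable def fundLoop (f : ℂ → ℂ) (R : ℝ) (n : ℤ) : Set ℂ :=
  frontier (fundHole f R n)

/-!
A nonconstant entire function is an open map, so by the maximum modulus principle
`|f(z)| < M(r, f)` whenever `|z| < r`. Hence the levels of the fast escaping set satisfy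
`A_R^L(f) = f⁻¹(A_R^{L+1}(f))`, and `A_R^L(f)` is closed. For a continuous open map `g` and an
open set `V`, a component `G` of `g⁻¹(V)` with compact closure is mapped onto a component of `V`:
`g(G)` is open and connected, and its closure `g(closure G)` meets `V` only in `g(G)` because
`∂G` lies outside `g⁻¹(V)`. Apply this to `g = fⁿ`.
-/

section Components

variable {X : Type*} [TopologicalSpace X] {U G : Set X}

theorem IsCompOf.subset (hG : IsCompOf G U) : G ⊆ U := by
  obtain ⟨z, -, rfl⟩ := hG
  exact connectedComponentIn_subset U z

theorem IsCompOf.isConnected (hG : IsCompOf G U) : IsConnected G := by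
  obtain ⟨z, hz, rfl⟩ := hG
  exact isConnected_connectedComponentIn_iff.mpr hz

theorem IsCompOf.isOpen [LocallyConnectedSpace X] (hU : IsOpen U) (hG : IsCompOf G U) :
    IsOpen G := by
  obtain ⟨z, -, rfl⟩ := hG
  exact hU.connectedComponentIn

theorem IsCompOf.frontier_subset [LocallyConnectedSpace X] (hU : IsOpen U)
    (hG : IsCompOf G U) : frontier G ⊆ Uᶜ := by
  intro w hw hwU
  have hGo := hG.isOpen hU
  rw [hGo.frontier_eq] at hw
  obtain ⟨z, -, rfl⟩ := hG
  obtain ⟨y, hyw, hyz⟩ := mem_closure_iff.mp hw.1 _ hU.connectedComponentIn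
    (mem_connectedComponentIn hwU)
  have hcomp : connectedComponentIn U w = connectedComponentIn U z := by
    rw [connectedComponentIn_eq hyw, connectedComponentIn_eq hyz]
  exact hw.2 (hcomp ▸ mem_connectedComponentIn hwU)

theorem isCompOf_of_closure_inter_subset {C V : Set X} (hC : IsConnected C) (hCo : IsOpen C)
    (hCV : C ⊆ V) (hV : IsOpen V) (hcl : closure C ∩ V ⊆ C) : IsCompOf C V := by
  obtain ⟨z, hz⟩ := hC.nonempty
  refine ⟨z, hCV hz, (hC.isPreconnected.subset_connectedComponentIn hz hCV).antisymm ?_⟩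
  have hcover : connectedComponentIn V z ⊆ C ∪ (V \ closure C) := fun w hw =>
    (em (w ∈ closure C)).imp (fun h => hcl ⟨h, connectedComponentIn_subset V z hw⟩)
      (fun h => ⟨connectedComponentIn_subset V z hw, h⟩)
  have hdisj : Disjoint C (V \ closure C) :=
    disjoint_left.mpr fun w hwC hw => hw.2 (subset_closure hwC)
  exact isPreconnected_connectedComponentIn.subset_left_of_subset_union hCo
    (hV.sdiff isClosed_closure) hdisj hcover ⟨z, mem_connectedComponentIn (hCV hz), hz⟩

theorem IsCompOf.image_of_isOpenMap [LocallyConnectedSpace X] {Y : Type*} [TopologicalSpace Y]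
    [T2Space Y] {g : X → Y} {V : Set Y} (hc : Continuous g) (ho : IsOpenMap g) (hV : IsOpen V)
    (hG : IsCompOf G (g ⁻¹' V)) (hGc : IsCompact (closure G)) : IsCompOf (g '' G) V := by
  have hU : IsOpen (g ⁻¹' V) := hV.preimage hc
  refine isCompOf_of_closure_inter_subset (hG.isConnected.image g hc.continuousOn)
    (ho G (hG.isOpen hU)) (image_subset_iff.mpr hG.subset) hV ?_
  rintro _ ⟨hw, hwV⟩
  rw [← image_closure_of_isCompact hGc hc.continuousOn] at hw
  obtain ⟨u, hu, rfl⟩ := hw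
  refine ⟨u, ?_, rfl⟩
  by_contra huG
  have hfr : u ∈ frontier G := ⟨hu, by rwa [(hG.isOpen hU).interior_eq]⟩
  exact hG.frontier_subset hU hfr hwV

end Components

theorem IsOpenMap.iterate {X : Type*} [TopologicalSpace X] {g : X → X} (hg : IsOpenMap g) :
    ∀ n : ℕ, IsOpenMap g^[n]
  | 0 => IsOpenMap.id
  | n + 1 => (hg.iterate n).comp hg

section MaxModulus

variable {f : ℂ → ℂ}

theorem TranscEntire.isOpenMap (hf : TranscEntire f) : IsOpenMap f := by
  refine (Complex.analyticOnNhd_univ_iff_differentiable.mpr hf.1).is_constant_or_isOpenMap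
    |>.resolve_left ?_
  rintro ⟨c, hc⟩
  exact hf.2 ⟨Polynomial.C c, fun z => by simp [hc z]⟩

theorem norm_le_maxMod (hf : Continuous f) {z : ℂ} {r : ℝ} (hz : ‖z‖ = r) :
    ‖f z‖ ≤ maxMod f r :=
  le_csSup ((isCompact_sphere 0 r).image hf.norm).bddAbove
    ⟨z, by simpa using hz, rfl⟩

theorem norm_lt_maxMod (hf : Differentiable ℂ f) (ho : IsOpenMap f) {z : ℂ} {r : ℝ}
    (hz : ‖z‖ < r) : ‖f z‖ < maxMod f r := by
  have hr : r ≠ 0 := ((norm_nonneg z).trans_lt hz).ne'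
  have hball : f '' ball 0 r ⊆ closedBall 0 (maxMod f r) := by
    rintro _ ⟨w, hw, rfl⟩
    rw [mem_closedBall_zero_iff]
    refine Complex.norm_le_of_forall_mem_frontier_norm_le isBounded_ball hf.diffContOnCl
      (fun u hu => ?_) (subset_closure hw)
    rw [frontier_ball 0 hr, mem_sphere_zero_iff_norm] at hu
    exact norm_le_maxMod hf.continuous hu
  have hfz : f z ∈ interior (closedBall 0 (maxMod f r)) :=
    interior_maximal hball (ho _ isOpen_ball) (mem_image_of_mem f (mem_ball_zero_iff.mpr hz))
  rwa [interior_closedBall', mem_ball_zero_iff] at hfz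

end MaxModulus

section Levels

variable {f : ℂ → ℂ}

theorem isClosed_levelSet (hc : Continuous f) (R : ℝ) (L : ℤ) : IsClosed (levelSet f R L) := by
  simp only [levelSet, ofPred_forall]
  exact isClosed_iInter fun n => isClosed_iInter fun _ =>
    isClosed_le continuous_const (hc.iterate n).norm

theorem levelSet_eq_preimage (hf : Differentiable ℂ f) (ho : IsOpenMap f) (R : ℝ) (L : ℤ) :
    levelSet f R L = f ⁻¹' levelSet f R (L + 1) := by
  have shift (n : ℕ) : (((n + 1 : ℕ) : ℤ) + L).toNat = ((n : ℤ) + (L + 1)).toNat := by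
    congr 1; push_cast; ring
  ext z
  constructor
  · intro hz n hn
    simpa only [iterate_succ_apply, shift] using hz (n + 1) (by omega)
  · rintro hz (_ | n) hn
    · by_contra! hlt
      have hidx : (((0 : ℕ) : ℤ) + (L + 1)).toNat = (((0 : ℕ) : ℤ) + L).toNat + 1 := by omega
      have hfz := hz 0 (by omega)
      rw [hidx, iterate_succ_apply'] at hfz
      exact (norm_lt_maxMod hf ho hlt).not_ge hfz
    · simpa only [iterate_succ_apply, shift] using hz n (by omega)

theorem levelSet_eq_preimage_iterate (hf : Differentiable ℂ f) (ho : IsOpenMap f) (R : ℝ)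
    (L : ℤ) : ∀ n : ℕ, levelSet f R L = f^[n] ⁻¹' levelSet f R (n + L)
  | 0 => by simp
  | n + 1 => by
    rw [levelSet_eq_preimage_iterate hf ho R L n, levelSet_eq_preimage hf ho R,
      iterate_succ', preimage_comp]
    push_cast
    ring_nf

end Levels

theorem stmt_13_general (f : ℂ → ℂ) (R : ℝ) (hf : TranscEntire f) (L : ℤ) (G : Set ℂ)
    (hG : IsCompOf G (levelSet f R L)ᶜ) (hbdd : Bornology.IsBounded G) :
    frontier G ⊆ levelSet f R L ∧
    ∀ n : ℕ, IsCompOf (f^[n] '' G) (levelSet f R ((n : ℤ) + L))ᶜ ∧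
      Bornology.IsBounded (f^[n] '' G) := by
  have hc : Continuous f := hf.1.continuous
  have ho : IsOpenMap f := hf.isOpenMap
  have hopen (K : ℤ) : IsOpen (levelSet f R K)ᶜ := (isClosed_levelSet hc R K).isOpen_compl
  refine ⟨by simpa using hG.frontier_subset (hopen L), fun n => ⟨?_, ?_⟩⟩
  · rw [levelSet_eq_preimage_iterate hf.1 ho R L n, ← preimage_compl] at hG
    exact hG.image_of_isOpenMap (hc.iterate n) (ho.iterate n) (hopen _) hbdd.isCompact_closure
  · exact (hbdd.isCompact_closure.image (hc.iterate n)).isBounded.subset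
      (image_mono subset_closure)

/-- boundaries and images of bounded components of `A_R^L(f)ᶜ`. -/
theorem stmt_13 (f : ℂ → ℂ) (R : ℝ) (hf : TranscEntire f) (hR : 0 < R)
    (hM : ∀ r ≥ R, r < maxMod f r) (L : ℤ) (G : Set ℂ)
    (hG : IsCompOf G (levelSet f R L)ᶜ) (hbdd : Bornology.IsBounded G) :
    frontier G ⊆ levelSet f R L ∧
    ∀ n : ℕ, IsCompOf (f^[n] '' G) (levelSet f R ((n : ℤ) + L))ᶜ ∧
      Bornology.IsBounded (f^[n] '' G) :=
  stmt_13_general f R hf L G hG hbdd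
end

section
/- Let f be a transcendental entire function, let R > 0 be such that M(r, f) > r for all r ≥ R, and suppose that A_R(f) is a spider's web. Let (H_m)_{m≥0} and (L_m)_{m≥0} be the sequences of fundamental holes and loops for A_R(f). Then for every n ∈ ℕ with n ≥ 1 and every m ≥ 0, f^n(H_m) = H_{m+n} and f^n(L_m) = L_{m+n}. -/
open Set Metric Topology Function Bornology

/-! The map `f` sends `A_R^m(f)` into `A_R^{m+1}(f)` and, by the strict maximum modulus
principle, its complement into the complement, i.e. `f⁻¹(A_R^{m+1}) = A_R^m`. Since `f` is
continuous and open, it then maps each bounded component of the complement of `A_R^m`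
onto a component of the complement of `A_R^{m+1}`, boundary onto boundary. The disc
`|z| < M^{m+1}(R)` misses `A_R^{m+1}` and contains both `0` and `f 0`, so the component
reached from `H_m` is `H_{m+1}`. The spider's web makes `H_0` bounded, and boundedness then
propagates along the holes. -/

section ConnectedComponent

variable {X Y : Type*} [TopologicalSpace X] [TopologicalSpace Y] {S : Set X} {a : X}

theorem frontier_connectedComponentIn_subset_compl [LocallyConnectedSpace X] (hS : IsOpen S) :
    frontier (connectedComponentIn S a) ⊆ Sᶜ := by
  intro x hx hxS
  obtain ⟨y, hyx, hya⟩ := mem_closure_iff.mp (frontier_subset_closure hx) _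
    hS.connectedComponentIn (mem_connectedComponentIn hxS)
  have hxa : x ∈ connectedComponentIn S a := by
    rw [connectedComponentIn_eq hya, ← connectedComponentIn_eq hyx]
    exact mem_connectedComponentIn hxS
  rw [hS.connectedComponentIn.frontier_eq] at hx
  exact hx.2 hxa

theorem connectedComponentIn_subset_of_frontier_subset_compl {G : Set X} (hG : IsOpen G)
    (hGS : frontier G ⊆ Sᶜ) (ha : a ∈ G) : connectedComponentIn S a ⊆ G := by
  by_cases haS : a ∈ S
  · refine isPreconnected_connectedComponentIn.subset_of_closure_inter_subset hG
      ⟨a, mem_connectedComponentIn haS, ha⟩ ?_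
    rintro x ⟨hxG, hxS⟩
    rw [closure_eq_self_union_frontier] at hxG
    exact hxG.resolve_right fun hx => hGS hx (connectedComponentIn_subset S a hxS)
  · simp [connectedComponentIn_eq_empty haS]

variable [T2Space Y] {f : X → Y} {T : Set Y}

theorem closure_image_subset_of_isCompact_closure {U : Set X} (hf : Continuous f)
    (hU : IsCompact (closure U)) : closure (f '' U) ⊆ f '' U ∪ f '' frontier U :=
  calc closure (f '' U) ⊆ f '' closure U :=
        closure_minimal (image_mono subset_closure) (hU.image hf).isClosed
    _ = f '' U ∪ f '' frontier U := by rw [closure_eq_self_union_frontier, image_union]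

variable [LocallyConnectedSpace X]

theorem image_connectedComponentIn_preimage (hf : Continuous f) (hfo : IsOpenMap f)
    (hT : IsOpen (f ⁻¹' T)) (ha : f a ∈ T)
    (hU : IsCompact (closure (connectedComponentIn (f ⁻¹' T) a))) :
    f '' connectedComponentIn (f ⁻¹' T) a = connectedComponentIn T (f a) := by
  have hfrontier : f '' frontier (connectedComponentIn (f ⁻¹' T) a) ⊆ Tᶜ :=
    image_subset_iff.mpr (frontier_connectedComponentIn_subset_compl hT)
  have hfa : f a ∈ f '' connectedComponentIn (f ⁻¹' T) a :=
    mem_image_of_mem f (mem_connectedComponentIn ha)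
  apply Subset.antisymm
  · refine (isPreconnected_connectedComponentIn.image f hf.continuousOn)
      |>.subset_connectedComponentIn hfa ?_
    rintro _ ⟨x, hx, rfl⟩
    exact connectedComponentIn_subset (f ⁻¹' T) a hx
  · refine isPreconnected_connectedComponentIn.subset_of_closure_inter_subset
      (hfo _ hT.connectedComponentIn) ⟨f a, mem_connectedComponentIn ha, hfa⟩ ?_
    rintro y ⟨hy, hyT⟩
    exact (closure_image_subset_of_isCompact_closure hf hU hy).resolve_right fun h =>
      hfrontier h (connectedComponentIn_subset T _ hyT)

theorem image_frontier_connectedComponentIn_preimage (hf : Continuous f) (hfo : IsOpenMap f)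
    (hT : IsOpen (f ⁻¹' T)) (ha : f a ∈ T)
    (hU : IsCompact (closure (connectedComponentIn (f ⁻¹' T) a))) :
    f '' frontier (connectedComponentIn (f ⁻¹' T) a) = frontier (connectedComponentIn T (f a)) := by
  have hfrontier : f '' frontier (connectedComponentIn (f ⁻¹' T) a) ⊆ Tᶜ :=
    image_subset_iff.mpr (frontier_connectedComponentIn_subset_compl hT)
  have hfUT : f '' connectedComponentIn (f ⁻¹' T) a ⊆ T := by
    rw [image_connectedComponentIn_preimage hf hfo hT ha hU]
    exact connectedComponentIn_subset T _
  rw [← image_connectedComponentIn_preimage hf hfo hT ha hU,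
    (hfo _ hT.connectedComponentIn).frontier_eq]
  apply Subset.antisymm
  · intro y hy
    exact ⟨image_closure_subset_closure_image hf (image_mono frontier_subset_closure hy),
      fun h => hfrontier hy (hfUT h)⟩
  · rintro y ⟨hy, hyU⟩
    exact (closure_image_subset_of_isCompact_closure hf hU hy).resolve_left hyU

end ConnectedComponent

namespace TranscEntire

variable {f : ℂ → ℂ}

theorem analyticOnNhd (hf : TranscEntire f) : AnalyticOnNhd ℂ f univ :=
  Complex.analyticOnNhd_univ_iff_differentiable.mpr hf.1

theorem not_forall_eq_const (hf : TranscEntire f) (c : ℂ) : ¬ ∀ z, f z = c :=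
  fun h => hf.2 ⟨Polynomial.C c, fun z => by simp [h z]⟩

theorem not_eventuallyEq_const (hf : TranscEntire f) (z₀ c : ℂ) :
    ¬ f =ᶠ[𝓝 z₀] fun _ => c := fun h =>
  hf.not_forall_eq_const c fun z => hf.analyticOnNhd.eqOn_of_preconnected_of_eventuallyEq
    analyticOnNhd_const isPreconnected_univ (mem_univ z₀) h (mem_univ z)

theorem isOpenMap_s17 (hf : TranscEntire f) : IsOpenMap f :=
  hf.analyticOnNhd.is_constant_or_isOpenMap.resolve_left fun ⟨c, h⟩ =>
    hf.not_forall_eq_const c h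

theorem norm_le_maxMod (hf : TranscEntire f) {r : ℝ} {z : ℂ} (hz : ‖z‖ ≤ r) :
    ‖f z‖ ≤ maxMod f r := by
  rcases (norm_nonneg z).trans hz |>.eq_or_lt with hr | hr
  · subst hr
    have hz0 : z = 0 := norm_eq_zero.mp (le_antisymm hz (norm_nonneg z))
    simp [maxMod, hz0]
  have hbdd : BddAbove ((fun z => ‖f z‖) '' sphere (0 : ℂ) r) :=
    ((isCompact_sphere 0 r).image (continuous_norm.comp hf.1.continuous)).bddAbove
  refine Complex.norm_le_of_forall_mem_frontier_norm_le (isBounded_ball (x := 0) (r := r))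
    hf.1.diffContOnCl (fun w hw => le_csSup hbdd ⟨w, ?_, rfl⟩) ?_
  · rwa [frontier_ball 0 hr.ne'] at hw
  · rwa [closure_ball 0 hr.ne', mem_closedBall_zero_iff]

theorem norm_lt_maxMod (hf : TranscEntire f) {r : ℝ} {z : ℂ} (hz : ‖z‖ < r) :
    ‖f z‖ < maxMod f r := by
  by_contra! h
  have hzr : z ∈ ball (0 : ℂ) r := mem_ball_zero_iff.mpr hz
  have hmax : IsMaxOn (norm ∘ f) (ball 0 r) z := fun w hw =>
    (hf.norm_le_maxMod (mem_ball_zero_iff.mp hw).le).trans h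
  exact hf.not_eventuallyEq_const z (f z) <| Complex.eventually_eq_of_isLocalMax_norm
    (.of_forall fun w => hf.1 w) (hmax.isLocalMax (isOpen_ball.mem_nhds hzr))

end TranscEntire

section FundamentalHoles

variable {f : ℂ → ℂ} {R : ℝ}

theorem le_maxMod_iterate (hM : ∀ r ≥ R, r < maxMod f r) (k : ℕ) : R ≤ (maxMod f)^[k] R := by
  induction k with
  | zero => rfl
  | succ k ih =>
    rw [iterate_succ_apply']
    exact ih.trans (hM _ ih).le

theorem mem_levelSet_natCast {m : ℕ} {z : ℂ} :
    z ∈ levelSet f R m ↔ ∀ n : ℕ, (maxMod f)^[n + m] R ≤ ‖f^[n] z‖ := by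
  refine forall_congr' fun n => ?_
  rw [show ((n : ℤ) + m).toNat = n + m by omega]
  exact ⟨fun h => h (by omega), fun h _ => h⟩

theorem isClosed_levelSet_natCast (hf : Continuous f) (m : ℕ) : IsClosed (levelSet f R m) := by
  have : levelSet f R m = ⋂ n : ℕ, {z | (maxMod f)^[n + m] R ≤ ‖f^[n] z‖} := by
    ext z
    rw [mem_levelSet_natCast, mem_iInter]
    rfl
  rw [this]
  exact isClosed_iInter fun n => isClosed_le continuous_const (hf.iterate n).norm

theorem maxMod_iterate_le_norm_of_mem_levelSet {m : ℕ} {z : ℂ} (h : z ∈ levelSet f R m) :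
    (maxMod f)^[m] R ≤ ‖z‖ := by
  simpa using mem_levelSet_natCast.mp h 0

theorem preimage_levelSet_natCast_succ (hf : TranscEntire f) (m : ℕ) :
    f ⁻¹' levelSet f R ↑(m + 1) = levelSet f R m := by
  ext z
  simp only [mem_preimage, mem_levelSet_natCast]
  constructor
  · rintro h (_ | n)
    · by_contra! hz
      have hfz := hf.norm_lt_maxMod (by simpa using hz)
      rw [← iterate_succ_apply' (maxMod f)] at hfz
      exact (h 0).not_gt (by simpa using hfz)
    · simpa [iterate_succ_apply, Nat.add_right_comm n 1 m, add_assoc] using h n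
  · intro h n
    simpa [iterate_succ_apply, Nat.add_right_comm n 1 m, add_assoc] using h (n + 1)

theorem ball_subset_fundHole (hR : 0 < R) (hM : ∀ r ≥ R, r < maxMod f r) (m : ℕ) :
    ball 0 ((maxMod f)^[m] R) ⊆ fundHole f R m :=
  (convex_ball 0 _).isPreconnected.subset_connectedComponentIn
    (mem_ball_self (hR.trans_le (le_maxMod_iterate hM m))) fun _ hz hzA =>
      (maxMod_iterate_le_norm_of_mem_levelSet hzA).not_gt (mem_ball_zero_iff.mp hz)

theorem apply_zero_mem_fundHole_succ (hf : TranscEntire f) (hR : 0 < R)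
    (hM : ∀ r ≥ R, r < maxMod f r) (m : ℕ) : f 0 ∈ fundHole f R ↑(m + 1) := by
  apply ball_subset_fundHole hR hM (m + 1)
  rw [mem_ball_zero_iff, iterate_succ_apply']
  exact hf.norm_lt_maxMod (by simpa using hR.trans_le (le_maxMod_iterate hM m))

theorem fundHole_eq_connectedComponentIn_preimage (hf : TranscEntire f) (m : ℕ) :
    fundHole f R m = connectedComponentIn (f ⁻¹' (levelSet f R ↑(m + 1))ᶜ) 0 := by
  rw [preimage_compl, preimage_levelSet_natCast_succ hf, fundHole]

theorem isOpen_preimage_compl_levelSet_natCast_succ (hf : TranscEntire f) (m : ℕ) :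
    IsOpen (f ⁻¹' (levelSet f R ↑(m + 1))ᶜ) := by
  rw [preimage_compl, preimage_levelSet_natCast_succ hf]
  exact (isClosed_levelSet_natCast hf.1.continuous m).isOpen_compl

theorem fundHole_succ_eq_connectedComponentIn (hf : TranscEntire f) (hR : 0 < R)
    (hM : ∀ r ≥ R, r < maxMod f r) (m : ℕ) :
    fundHole f R ↑(m + 1) = connectedComponentIn (levelSet f R ↑(m + 1))ᶜ (f 0) :=
  connectedComponentIn_eq (apply_zero_mem_fundHole_succ hf hR hM m)

theorem image_fundHole (hf : TranscEntire f) (hR : 0 < R) (hM : ∀ r ≥ R, r < maxMod f r)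
    {m : ℕ} (hH : IsCompact (closure (fundHole f R m))) :
    f '' fundHole f R m = fundHole f R ↑(m + 1) := by
  rw [fundHole_eq_connectedComponentIn_preimage hf] at hH ⊢
  rw [fundHole_succ_eq_connectedComponentIn hf hR hM]
  exact image_connectedComponentIn_preimage hf.1.continuous hf.isOpenMap_s17
    (isOpen_preimage_compl_levelSet_natCast_succ hf m)
    (connectedComponentIn_subset _ _ (apply_zero_mem_fundHole_succ hf hR hM m)) hH

theorem image_fundLoop (hf : TranscEntire f) (hR : 0 < R) (hM : ∀ r ≥ R, r < maxMod f r)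
    {m : ℕ} (hH : IsCompact (closure (fundHole f R m))) :
    f '' fundLoop f R m = fundLoop f R ↑(m + 1) := by
  rw [fundLoop, fundLoop, fundHole_eq_connectedComponentIn_preimage hf]
  rw [fundHole_eq_connectedComponentIn_preimage hf] at hH
  rw [fundHole_succ_eq_connectedComponentIn hf hR hM]
  exact image_frontier_connectedComponentIn_preimage hf.1.continuous hf.isOpenMap_s17
    (isOpen_preimage_compl_levelSet_natCast_succ hf m)
    (connectedComponentIn_subset _ _ (apply_zero_mem_fundHole_succ hf hR hM m)) hH

theorem isCompact_closure_fundHole (hf : TranscEntire f) (hR : 0 < R)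
    (hM : ∀ r ≥ R, r < maxMod f r) (hweb : SpidersWeb (levelSet f R 0)) (m : ℕ) :
    IsCompact (closure (fundHole f R m)) := by
  induction m with
  | zero =>
    obtain ⟨-, G, hG, hGcover⟩ := hweb
    obtain ⟨k, h0⟩ := mem_iUnion.mp (hGcover ▸ mem_univ (0 : ℂ))
    obtain ⟨hGopen, -, hGbdd, -, -, hGfrontier⟩ := hG k
    refine (hGbdd.subset ?_).isCompact_closure
    exact connectedComponentIn_subset_of_frontier_subset_compl hGopen
      (by rwa [compl_compl, Nat.cast_zero]) h0
  | succ m ih =>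
    rw [← image_fundHole hf hR hM ih]
    exact (ih.image hf.1.continuous).closure_of_subset (image_mono subset_closure)

theorem image_iterate_fundHole (hf : TranscEntire f) (hR : 0 < R)
    (hM : ∀ r ≥ R, r < maxMod f r) (hweb : SpidersWeb (levelSet f R 0)) (n m : ℕ) :
    f^[n] '' fundHole f R m = fundHole f R ↑(m + n) := by
  induction n with
  | zero => simp
  | succ n ih =>
    rw [iterate_succ', image_comp, ih,
      image_fundHole hf hR hM (isCompact_closure_fundHole hf hR hM hweb _), add_assoc]

theorem image_iterate_fundLoop (hf : TranscEntire f) (hR : 0 < R)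
    (hM : ∀ r ≥ R, r < maxMod f r) (hweb : SpidersWeb (levelSet f R 0)) (n m : ℕ) :
    f^[n] '' fundLoop f R m = fundLoop f R ↑(m + n) := by
  induction n with
  | zero => simp
  | succ n ih =>
    rw [iterate_succ', image_comp, ih,
      image_fundLoop hf hR hM (isCompact_closure_fundHole hf hR hM hweb _), add_assoc]

end FundamentalHoles

/-- `f^n(H_m) = H_{m+n}` and `f^n(L_m) = L_{m+n}`. -/
theorem stmt_17 (f : ℂ → ℂ) (R : ℝ) (hf : TranscEntire f) (hR : 0 < R)
    (hM : ∀ r ≥ R, r < maxMod f r) (hweb : SpidersWeb (levelSet f R 0)) :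
    ∀ n : ℕ, 1 ≤ n → ∀ m : ℕ,
      f^[n] '' fundHole f R m = fundHole f R (m + n) ∧
      f^[n] '' fundLoop f R m = fundLoop f R (m + n) := by
  intro n _ m
  rw [← Nat.cast_add]
  exact ⟨image_iterate_fundHole hf hR hM hweb n m, image_iterate_fundLoop hf hR hM hweb n m⟩
end
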